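/- (One-step prediction error inequality from the proof of Theorem 3.4.) Let A, Â ∈ ℂ^{n×n} be Hermitian, τ > 0, and C ≥ 0 a constant such that ‖(A − Â) v‖₂ ≤ C ‖v‖₂ for all v ∈ ℂⁿ. Suppose vectors u, u', x, x', b ∈ ℂⁿ satisfy i (u' − u)/τ = Â ((u' + u)/2) + b and x' = (I + i(τ/2)A)⁻¹ (I − i(τ/2)A) x. Then, writing e = u − x and e' = u' − x', ‖e'‖₂ ≤ ‖e‖₂ + (τ/2) C (‖x‖₂ + ‖x'‖₂) + τ ‖b‖₂. -/

import Mathlib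

/-!
Subtracting the two Crank–Nicolson steps, the error satisfies
`e' + i(τ/2) Â e' = e − i(τ/2) Â e + r` with `r = i(τ/2)(A − Â)(x + x') − iτ b`.
Since `⟪z, Â z⟫` is real for Hermitian `Â`, pairing `e' − e = r − i(τ/2) Â (e' + e)` with `e' + e`
gives the energy identity `‖e'‖² − ‖e‖² = Re ⟪e' + e, r⟫ ≤ (‖e'‖ + ‖e‖) ‖r‖`, so `‖e'‖ ≤ ‖e‖ + ‖r‖`.
The same estimate with `e = r = 0` shows that `1 + i(τ/2) A` is invertible, so the hypothesis on
`x'` can be rewritten as `x' + i(τ/2) A x' = x − i(τ/2) A x`.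
-/

open Matrix

/-- The Euclidean (2-)norm of a vector in `ℂⁿ`: `‖x‖₂ = (∑ k |x_k|²)^{1/2}`. -/
noncomputable def euclNorm {n : ℕ} (v : Fin n → ℂ) : ℝ :=
  Real.sqrt (∑ k, ‖v k‖ ^ 2)

open Complex

section InnerProductSpace

variable {E : Type*} [NormedAddCommGroup E] [InnerProductSpace ℂ E]

theorem re_inner_add_sub_eq_norm_sq_sub_norm_sq (x y : E) :
    re (inner ℂ (x + y) (x - y)) = ‖x‖ ^ 2 - ‖y‖ ^ 2 := by
  have hx := inner_self_eq_norm_sq (𝕜 := ℂ) x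
  have hy := inner_self_eq_norm_sq (𝕜 := ℂ) y
  have hyx := inner_re_symm (𝕜 := ℂ) y x
  simp only [RCLike.re_to_complex] at hx hy hyx
  rw [inner_add_left, inner_sub_right, inner_sub_right, add_re, sub_re, sub_re, hx, hy, hyx]
  ring

namespace LinearMap.IsSymmetric

variable {T : E →ₗ[ℂ] E}

theorem re_inner_I_mul_smul_apply_self (hT : T.IsSymmetric) (c : ℝ) (v : E) :
    re (inner ℂ v ((I * c) • T v)) = 0 := by
  rw [inner_smul_right, ← hT.coe_re_inner_self_apply]
  simp

theorem norm_le_add_of_add_I_mul_smul_eq (hT : T.IsSymmetric) (c : ℝ) {v w r : E}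
    (h : w + (I * c) • T w = v - (I * c) • T v + r) : ‖w‖ ≤ ‖v‖ + ‖r‖ := by
  have hdiff : (I * c) • T (w + v) = r - (w - v) := by
    rw [map_add]
    linear_combination (norm := module) h
  have henergy : ‖w‖ ^ 2 - ‖v‖ ^ 2 = re (inner ℂ (w + v) r) := by
    have h0 := hT.re_inner_I_mul_smul_apply_self c (w + v)
    rw [hdiff, inner_sub_right, sub_re, re_inner_add_sub_eq_norm_sq_sub_norm_sq] at h0
    linarith
  have hcs : re (inner ℂ (w + v) r) ≤ (‖w‖ + ‖v‖) * ‖r‖ :=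
    (re_inner_le_norm (𝕜 := ℂ) (w + v) r).trans
      (mul_le_mul_of_nonneg_right (norm_add_le w v) (norm_nonneg r))
  nlinarith [norm_nonneg w, norm_nonneg v, norm_nonneg r]

end LinearMap.IsSymmetric

end InnerProductSpace

section euclNorm

variable {n : ℕ}

theorem euclNorm_eq_norm_toLp (v : Fin n → ℂ) :
    euclNorm v = ‖(WithLp.toLp 2 v : EuclideanSpace ℂ (Fin n))‖ := by
  simp [euclNorm, EuclideanSpace.norm_eq]

theorem euclNorm_eq_zero {v : Fin n → ℂ} : euclNorm v = 0 ↔ v = 0 := by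
  simp [euclNorm_eq_norm_toLp]

theorem euclNorm_add_le (v w : Fin n → ℂ) : euclNorm (v + w) ≤ euclNorm v + euclNorm w := by
  simpa [euclNorm_eq_norm_toLp] using
    norm_add_le (WithLp.toLp 2 v : EuclideanSpace ℂ (Fin n)) (WithLp.toLp 2 w)

theorem euclNorm_sub_le (v w : Fin n → ℂ) : euclNorm (v - w) ≤ euclNorm v + euclNorm w := by
  simpa [euclNorm_eq_norm_toLp] using
    norm_sub_le (WithLp.toLp 2 v : EuclideanSpace ℂ (Fin n)) (WithLp.toLp 2 w)

theorem euclNorm_smul (a : ℂ) (v : Fin n → ℂ) : euclNorm (a • v) = ‖a‖ * euclNorm v := by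
  simpa [euclNorm_eq_norm_toLp] using norm_smul a (WithLp.toLp 2 v : EuclideanSpace ℂ (Fin n))

end euclNorm

namespace Matrix

theorem mulVec_eq_of_eq_inv_mul_mulVec {m K : Type*} [Fintype m] [DecidableEq m] [CommRing K]
    {M N : Matrix m m K} (hM : IsUnit M) {x x' : m → K} (h : x' = (M⁻¹ * N) *ᵥ x) :
    M *ᵥ x' = N *ᵥ x := by
  rw [h, mulVec_mulVec, mul_nonsing_inv_cancel_left _ _ ((isUnit_iff_isUnit_det M).1 hM)]

theorem crankNicolson_form_of_midpoint_eq {ι : Type*} [Fintype ι] (H : Matrix ι ι ℂ) {τ : ℝ}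
    (hτ : τ ≠ 0) {u u' b : ι → ℂ}
    (h : (I / τ) • (u' - u) = H *ᵥ ((2 : ℂ)⁻¹ • (u' + u)) + b) :
    u' + (I * (τ / 2 : ℝ)) • H *ᵥ u' = u - (I * (τ / 2 : ℝ)) • H *ᵥ u - (I * τ) • b := by
  have hinv : (I / τ)⁻¹ = -(I * τ) := by
    field_simp
    rw [I_sq]
    ring
  rw [← eq_inv_smul_iff₀ (by simp [hτ]), hinv, mulVec_smul, mulVec_add] at h
  push_cast
  linear_combination (norm := module) h

namespace IsHermitian

variable {n : ℕ} {H : Matrix (Fin n) (Fin n) ℂ}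

theorem euclNorm_le_add_of_add_I_mul_smul_eq (hH : H.IsHermitian) (c : ℝ) {v w r : Fin n → ℂ}
    (h : w + (I * c) • H *ᵥ w = v - (I * c) • H *ᵥ v + r) :
    euclNorm w ≤ euclNorm v + euclNorm r := by
  simp only [euclNorm_eq_norm_toLp]
  exact (isSymmetric_toEuclideanLin_iff.2 hH).norm_le_add_of_add_I_mul_smul_eq c
    (congrArg (WithLp.toLp 2) h)

theorem isUnit_one_add_I_mul_smul (hH : H.IsHermitian) (c : ℝ) : IsUnit (1 + (I * c) • H) := by
  refine mulVec_injective_iff_isUnit.1 fun v w hvw => sub_eq_zero.1 ?_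
  have h : (v - w) + (I * c) • H *ᵥ (v - w) = 0 - (I * c) • H *ᵥ 0 + 0 := by
    simp only [add_mulVec, one_mulVec, smul_mulVec] at hvw
    rw [mulVec_sub, mulVec_zero]
    linear_combination (norm := module) hvw
  have hle := hH.euclNorm_le_add_of_add_I_mul_smul_eq c h
  rw [euclNorm_eq_zero.2 rfl, add_zero] at hle
  exact euclNorm_eq_zero.1 (le_antisymm hle (by simp [euclNorm_eq_norm_toLp]))

end IsHermitian

end Matrix

theorem cnDMD_one_step_prediction_estimate_general (n : ℕ) (A Ahat : Matrix (Fin n) (Fin n) ℂ)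
    (hA : A.IsHermitian) (hAhat : Ahat.IsHermitian) (τ : ℝ) (hτ : 0 < τ)
    (C : ℝ)
    (hbound : ∀ v : Fin n → ℂ, euclNorm ((A - Ahat).mulVec v) ≤ C * euclNorm v)
    (u u' x x' b : Fin n → ℂ)
    (hu : (Complex.I / (τ : ℂ)) • (u' - u) = Ahat.mulVec ((2 : ℂ)⁻¹ • (u' + u)) + b)
    (hx : x' = ((1 + (Complex.I * ((τ : ℂ) / 2)) • A)⁻¹ *
        (1 - (Complex.I * ((τ : ℂ) / 2)) • A)).mulVec x) :
    euclNorm (u' - x') ≤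
      euclNorm (u - x) + (τ / 2) * C * (euclNorm x + euclNorm x') + τ * euclNorm b := by
  rw [show (τ : ℂ) / 2 = (τ / 2 : ℝ) by push_cast; rfl] at hx
  have hx_step := mulVec_eq_of_eq_inv_mul_mulVec (hA.isUnit_one_add_I_mul_smul _) hx
  have hu_step := crankNicolson_form_of_midpoint_eq Ahat hτ.ne' hu
  set s : ℂ := I * (τ / 2 : ℝ)
  have herr : (u' - x') + s • Ahat *ᵥ (u' - x') =
      (u - x) - s • Ahat *ᵥ (u - x) + (s • (A - Ahat) *ᵥ (x + x') - (I * τ) • b) := by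
    simp only [add_mulVec, sub_mulVec, one_mulVec, smul_mulVec, mulVec_add, mulVec_sub] at hx_step ⊢
    linear_combination (norm := module) hu_step - hx_step
  have hdefect : euclNorm ((A - Ahat) *ᵥ (x + x')) ≤ C * (euclNorm x + euclNorm x') := by
    rw [mulVec_add, mul_add]
    exact (euclNorm_add_le _ _).trans (add_le_add (hbound x) (hbound x'))
  calc euclNorm (u' - x')
      ≤ euclNorm (u - x) + euclNorm (s • (A - Ahat) *ᵥ (x + x') - (I * τ) • b) :=
        hAhat.euclNorm_le_add_of_add_I_mul_smul_eq _ herr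
    _ ≤ euclNorm (u - x) + (τ / 2 * euclNorm ((A - Ahat) *ᵥ (x + x')) + τ * euclNorm b) := by
        gcongr
        refine (euclNorm_sub_le _ _).trans (le_of_eq ?_)
        simp [s, euclNorm_smul, abs_of_pos hτ]
    _ ≤ euclNorm (u - x) + (τ / 2 * (C * (euclNorm x + euclNorm x')) + τ * euclNorm b) := by
        gcongr
    _ = _ := by ring

/-- **one-step prediction error inequality from the proof of Theorem 3.4.**
Let `A, Â ∈ ℂ^{n×n}` be Hermitian, `τ > 0`, and `C ≥ 0` with `‖(A − Â) v‖₂ ≤ C ‖v‖₂` for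
all `v`.  If `i (u' − u)/τ = Â ((u' + u)/2) + b` and
`x' = (I + i(τ/2)A)⁻¹ (I − i(τ/2)A) x`, then with `e = u − x`, `e' = u' − x'`,
`‖e'‖₂ ≤ ‖e‖₂ + (τ/2) C (‖x‖₂ + ‖x'‖₂) + τ ‖b‖₂`. -/
theorem cnDMD_one_step_prediction_estimate (n : ℕ) (A Ahat : Matrix (Fin n) (Fin n) ℂ)
    (hA : A.IsHermitian) (hAhat : Ahat.IsHermitian) (τ : ℝ) (hτ : 0 < τ)
    (C : ℝ) (hC : 0 ≤ C)
    (hbound : ∀ v : Fin n → ℂ, euclNorm ((A - Ahat).mulVec v) ≤ C * euclNorm v)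
    (u u' x x' b : Fin n → ℂ)
    (hu : (Complex.I / (τ : ℂ)) • (u' - u) = Ahat.mulVec ((2 : ℂ)⁻¹ • (u' + u)) + b)
    (hx : x' = ((1 + (Complex.I * ((τ : ℂ) / 2)) • A)⁻¹ *
        (1 - (Complex.I * ((τ : ℂ) / 2)) • A)).mulVec x) :
    euclNorm (u' - x') ≤
      euclNorm (u - x) + (τ / 2) * C * (euclNorm x + euclNorm x') + τ * euclNorm b :=
  cnDMD_one_step_prediction_estimate_general n A Ahat hA hAhat τ hτ C hbound u u' x x' b hu hx
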